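/- Let f : U → ℝ be a function on an open set U ⊆ ℝⁿ, let Z ⊆ U be a closed set with empty interior such that f is differentiable on U ∖ Z, and suppose both f and each partial derivative ∂f/∂xᵢ (defined on U ∖ Z) extend continuously to U. If for every a ∈ U and every i the line through a parallel to the i-th axis meets Z in a discrete set, then f is C¹ on U and its partial derivatives are the continuous extensions. -/

import Mathlib

open Topology

/-!
Through a point of `Z`, the restriction of `f` to an axis-parallel line is differentiable at all
nearby points of the line other than it, with derivative `g i`, which is continuous; the
one-variable derivative-extension theorem (a mean value argument) then makes `g i` the
derivative at that point as well. So the partial derivatives of `f` exist on all of `U` and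
equal the continuous functions `g i`, and the classical argument — change one coordinate at a
time and apply the mean value theorem along each edge — shows that `f` is differentiable with continuous derivative `v ↦ ∑ i, v i • g i`.
-/

open Filter Function Set

section

variable {E : Type*} [NormedAddCommGroup E] [NormedSpace ℝ E]

theorem hasDerivAt_of_eventually_hasDerivAt_of_ne {f g : ℝ → E} {x : ℝ}
    (hderiv : ∀ᶠ y in 𝓝[≠] x, HasDerivAt f (g y) y) (hf : ContinuousAt f x)
    (hg : ContinuousAt g x) : HasDerivAt f (g x) x := by
  have hdiff : DifferentiableOn ℝ f {y | HasDerivAt f (g y) y} := fun _ hy =>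
    hy.differentiableAt.differentiableWithinAt
  have hlim : ∀ l ≤ 𝓝[≠] x, Tendsto (deriv f) l (𝓝 (g x)) := fun l hl =>
    (hg.tendsto.mono_left (hl.trans nhdsWithin_le_nhds)).congr' <|
      (hderiv.filter_mono hl).mono fun y hy => hy.deriv.symm
  have hGT : 𝓝[>] x ≤ 𝓝[≠] x := nhdsWithin_mono _ fun _ hy => ne_of_gt hy
  have hLT : 𝓝[<] x ≤ 𝓝[≠] x := nhdsWithin_mono _ fun _ hy => ne_of_lt hy
  have hright : HasDerivWithinAt f (g x) (Ici x) x :=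
    hasDerivWithinAt_Ici_of_tendsto_deriv hdiff hf.continuousWithinAt (hGT hderiv) (hlim _ hGT)
  have hleft : HasDerivWithinAt f (g x) (Iic x) x :=
    hasDerivWithinAt_Iic_of_tendsto_deriv hdiff hf.continuousWithinAt (hLT hderiv) (hlim _ hLT)
  simpa using hleft.union hright

theorem norm_sub_sub_smul_le_of_hasDerivAt {φ ψ : ℝ → E} {a b : ℝ} {c : E} {ε : ℝ}
    (hderiv : ∀ t ∈ uIcc a b, HasDerivAt φ (ψ t) t) (hbound : ∀ t ∈ uIcc a b, ‖ψ t - c‖ ≤ ε) :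
    ‖φ b - φ a - (b - a) • c‖ ≤ ε * |b - a| := by
  have hmvt := Convex.norm_image_sub_le_of_norm_hasDerivWithin_le (f := fun t => φ t - t • c)
    (fun t ht => ((hderiv t ht).sub ((hasDerivAt_id t).smul_const c)).hasDerivWithinAt)
    (by simpa using hbound) (convex_uIcc a b) left_mem_uIcc right_mem_uIcc
  rw [← Real.norm_eq_abs]
  convert hmvt using 2
  simp only [sub_smul]
  abel

variable {ι : Type*} [DecidableEq ι]

theorem norm_piecewise_sub_sub_sum_le {f : (ι → ℝ) → E} {g : ι → (ι → ℝ) → E}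
    {B : ι → Set ℝ} (hB : ∀ i, (B i).OrdConnected) {a y : ι → ℝ} (ha : a ∈ univ.pi B)
    (hy : y ∈ univ.pi B)
    (hderiv : ∀ x ∈ univ.pi B, ∀ i, HasDerivAt (fun t => f (update x i t)) (g i x) (x i))
    {ε : ℝ} (hbound : ∀ x ∈ univ.pi B, ∀ i, ‖g i x - g i a‖ ≤ ε) (s : Finset ι) :
    ‖f (s.piecewise y a) - f a - ∑ i ∈ s, (y i - a i) • g i a‖ ≤ ε * ∑ i ∈ s, |y i - a i| := by
  induction s using Finset.induction_on with
  | empty => simp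
  | insert i s hi ih =>
    set x := s.piecewise y a
    have hx : x ∈ univ.pi B := Finset.piecewise_mem_set_pi _ hy ha
    have hxi : x i = a i := Finset.piecewise_eq_of_notMem _ _ _ hi
    have hline : ∀ t ∈ uIcc (a i) (y i), update x i t ∈ univ.pi B := fun t ht =>
      (update_mem_pi_iff_of_mem hx).2 fun _ => (hB i).uIcc_subset (ha i trivial) (hy i trivial) ht
    have hxa : update x i (a i) = x := by rw [← hxi, update_eq_self]
    have hstep : ‖f (update x i (y i)) - f x - (y i - a i) • g i a‖ ≤ ε * |y i - a i| := by
      have := norm_sub_sub_smul_le_of_hasDerivAt (φ := fun t => f (update x i t))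
        (fun t ht => by simpa using hderiv _ (hline t ht) i)
        (fun t ht => hbound _ (hline t ht) i)
      rwa [hxa] at this
    rw [Finset.piecewise_insert, Finset.sum_insert hi, Finset.sum_insert hi, mul_add]
    calc _ = ‖(f (update x i (y i)) - f x - (y i - a i) • g i a) +
            (f x - f a - ∑ j ∈ s, (y j - a j) • g j a)‖ := by congr 1; abel
      _ ≤ _ := (norm_add_le _ _).trans (add_le_add hstep ih)

theorem hasFDerivAt_of_hasDerivAt_update [Fintype ι] {f : (ι → ℝ) → E}
    {g : ι → (ι → ℝ) → E} {a : ι → ℝ}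
    (hderiv : ∀ᶠ x in 𝓝 a, ∀ i, HasDerivAt (fun t => f (update x i t)) (g i x) (x i))
    (hcont : ∀ i, ContinuousAt (g i) a) :
    HasFDerivAt f (∑ i, (ContinuousLinearMap.proj (R := ℝ) i).smulRight (g i a)) a := by
  rw [hasFDerivAt_iff_isLittleO, Asymptotics.isLittleO_iff]
  intro c hc
  set N : ℝ := (Fintype.card ι : ℝ)
  -- `N + 1` rather than `N`, which vanishes when `ι` is empty
  have hε : 0 < c / (N + 1) := by positivity
  have hnear : ∀ᶠ x in 𝓝 a, (∀ i, HasDerivAt (fun t => f (update x i t)) (g i x) (x i)) ∧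
      ∀ i, ‖g i x - g i a‖ ≤ c / (N + 1) :=
    hderiv.and <| eventually_all.2 fun i =>
      (hcont i).eventually (Metric.closedBall_mem_nhds _ hε) |>.mono fun x hx => by
        rwa [← dist_eq_norm]
  obtain ⟨δ, hδ, hball⟩ := Metric.eventually_nhds_iff_ball.1 hnear
  filter_upwards [Metric.ball_mem_nhds a hδ] with y hy
  rw [ball_pi _ hδ] at hball hy
  have hsum := norm_piecewise_sub_sub_sum_le (fun _ => (convex_ball _ _).ordConnected)
    (mem_univ_pi.2 fun j => Metric.mem_ball_self hδ) hy (fun x hx => (hball x hx).1)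
    (fun x hx => (hball x hx).2) Finset.univ
  have hcoord : ∑ i, |y i - a i| ≤ N * ‖y - a‖ := by
    simpa using Finset.sum_le_card_nsmul Finset.univ _ _ fun i _ => norm_le_pi_norm (y - a) i
  calc ‖f y - f a - (∑ i, (ContinuousLinearMap.proj (R := ℝ) i).smulRight (g i a)) (y - a)‖
      = ‖f (Finset.univ.piecewise y a) - f a - ∑ i, (y i - a i) • g i a‖ := by simp
    _ ≤ c / (N + 1) * (N * ‖y - a‖) := hsum.trans (by gcongr)
    _ ≤ c * ‖y - a‖ := by
      rw [← mul_assoc]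
      gcongr
      rw [div_mul_eq_mul_div, div_le_iff₀ (by positivity)]
      nlinarith

theorem HasFDerivAt.hasDerivAt_update {𝕜 F : Type*} [NontriviallyNormedField 𝕜]
    [NormedAddCommGroup F] [NormedSpace 𝕜 F] [Fintype ι] {f : (ι → 𝕜) → F}
    {f' : (ι → 𝕜) →L[𝕜] F} {x : ι → 𝕜} (hf : HasFDerivAt f f' x) (i : ι) :
    HasDerivAt (fun t => f (update x i t)) (f' (Pi.single i 1)) (x i) := by
  rw [← update_eq_self i x] at hf
  exact hf.comp_hasDerivAt (x i) (_root_.hasDerivAt_update x i (x i))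

theorem hasDerivAt_update_of_eventually_notMem {U Z : Set (ι → ℝ)} {f : (ι → ℝ) → E}
    {g : (ι → ℝ) → E} {a : ι → ℝ} {i : ι} (hU : U ∈ 𝓝 a)
    (hderiv : ∀ x ∈ U \ Z, HasDerivAt (fun t => f (update x i t)) (g x) (x i))
    (hf : ContinuousAt f a) (hg : ContinuousAt g a)
    (hZ : ∀ᶠ t in 𝓝[≠] (a i), update a i t ∉ Z) :
    HasDerivAt (fun t => f (update a i t)) (g a) (a i) := by
  have hline : ContinuousAt (update a i) (a i) :=
    (continuous_const.update i continuous_id).continuousAt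
  rw [← update_eq_self i a] at hU hf hg
  have hU' : ∀ᶠ t in 𝓝[≠] (a i), update a i t ∈ U := nhdsWithin_le_nhds (hline hU)
  simpa using hasDerivAt_of_eventually_hasDerivAt_of_ne (f := fun t => f (update a i t))
    ((hU'.and hZ).mono fun t ht => by simpa using hderiv _ ht) (hf.comp hline) (hg.comp hline)

theorem contDiffOn_one_of_hasFDerivAt {𝕜 E F : Type*} [NontriviallyNormedField 𝕜]
    [NormedAddCommGroup E] [NormedSpace 𝕜 E] [NormedAddCommGroup F] [NormedSpace 𝕜 F]
    {f : E → F} {f' : E → E →L[𝕜] F} {U : Set E} (hU : IsOpen U)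
    (hf : ∀ x ∈ U, HasFDerivAt f (f' x) x) (hf' : ContinuousOn f' U) : ContDiffOn 𝕜 1 f U := by
  rw [← zero_add 1, contDiffOn_succ_iff_hasFDerivWithinAt_of_uniqueDiffOn hU.uniqueDiffOn]
  exact ⟨by simp, f', contDiffOn_zero.2 hf', fun x hx => (hf x hx).hasFDerivWithinAt⟩

end

theorem c1_of_continuous_extension_of_derivs_general {n : ℕ} (U Z : Set (Fin n → ℝ))
    (hU : IsOpen U)
    (f : (Fin n → ℝ) → ℝ)
    (hdiff : ∀ x ∈ U \ Z, DifferentiableAt ℝ f x)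
    (hfc : ContinuousOn f U)
    (g : Fin n → (Fin n → ℝ) → ℝ)
    (hgc : ∀ i, ContinuousOn (g i) U)
    (hgd : ∀ i, ∀ x ∈ U \ Z, g i x = fderiv ℝ f x (Pi.single i 1))
    (hdisc : ∀ a ∈ U, ∀ i : Fin n, ∀ t₀ : ℝ, Function.update a i t₀ ∈ Z →
      ∃ ε > 0, ∀ t : ℝ, Function.update a i t ∈ Z → |t - t₀| < ε → t = t₀) :
    ContDiffOn ℝ 1 f U ∧ ∀ i, ∀ x ∈ U, fderiv ℝ f x (Pi.single i 1) = g i x := by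
  have hoff : ∀ i, ∀ x ∈ U \ Z, HasDerivAt (fun t => f (update x i t)) (g i x) (x i) :=
    fun i x hx => hgd i x hx ▸ (hdiff x hx).hasFDerivAt.hasDerivAt_update i
  have hline : ∀ a ∈ U, ∀ i, HasDerivAt (fun t => f (update a i t)) (g i a) (a i) := by
    intro a ha i
    by_cases haZ : a ∈ Z
    · obtain ⟨ε, hε, hiso⟩ := hdisc a ha i (a i) (by rwa [update_eq_self])
      exact hasDerivAt_update_of_eventually_notMem (hU.mem_nhds ha) (hoff i)
        (hfc.continuousAt (hU.mem_nhds ha)) ((hgc i).continuousAt (hU.mem_nhds ha)) <|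
        eventually_nhdsWithin_iff.2 <| Metric.eventually_nhds_iff.2
          ⟨ε, hε, fun t ht hne hZt => hne (hiso t hZt (by rwa [← Real.dist_eq]))⟩
    · exact hoff i a ⟨ha, haZ⟩
  set G : (Fin n → ℝ) → (Fin n → ℝ) →L[ℝ] ℝ :=
    fun x => ∑ i, (ContinuousLinearMap.proj (R := ℝ) i).smulRight (g i x)
  have hfG : ∀ x ∈ U, HasFDerivAt f (G x) x := fun x hx =>
    hasFDerivAt_of_hasDerivAt_update (eventually_of_mem (hU.mem_nhds hx) hline)
      fun i => (hgc i).continuousAt (hU.mem_nhds hx)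
  have hGc : ContinuousOn G U := continuousOn_finsetSum _ fun i _ =>
    (ContinuousLinearMap.smulRightL ℝ (Fin n → ℝ) ℝ
      (ContinuousLinearMap.proj (R := ℝ) i)).continuous.comp_continuousOn (hgc i)
  exact ⟨contDiffOn_one_of_hasFDerivAt hU hfG hGc,
    fun i x hx => by simp [(hfG x hx).fderiv, G, Pi.single_apply]⟩

/-- L'Hospital-type extension step: if `f` is differentiable off a closed thin set `Z`,
`f` and its partial derivatives (off `Z`) extend continuously to `U`, and every
axis-parallel line meets `Z` discretely, then `f` is `C¹` on `U` and its partial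
derivatives are the continuous extensions. -/
theorem c1_of_continuous_extension_of_derivs {n : ℕ} (U Z : Set (Fin n → ℝ))
    (hU : IsOpen U) (hZU : Z ⊆ U) (hZ : IsClosed Z) (hZint : interior Z = ∅)
    (f : (Fin n → ℝ) → ℝ)
    (hdiff : ∀ x ∈ U \ Z, DifferentiableAt ℝ f x)
    (hfc : ContinuousOn f U)
    (g : Fin n → (Fin n → ℝ) → ℝ)
    (hgc : ∀ i, ContinuousOn (g i) U)
    (hgd : ∀ i, ∀ x ∈ U \ Z, g i x = fderiv ℝ f x (Pi.single i 1))
    (hdisc : ∀ a ∈ U, ∀ i : Fin n, ∀ t₀ : ℝ, Function.update a i t₀ ∈ Z →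
      ∃ ε > 0, ∀ t : ℝ, Function.update a i t ∈ Z → |t - t₀| < ε → t = t₀) :
    ContDiffOn ℝ 1 f U ∧ ∀ i, ∀ x ∈ U, fderiv ℝ f x (Pi.single i 1) = g i x :=
  c1_of_continuous_extension_of_derivs_general U Z hU f hdiff hfc g hgc hgd hdisc
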